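/- Let φ = (1+√5)/2, let 2 < β < 2φ, and let T : ℝ → ℝ be defined by T(x) = x + 2 if x ≤ 0 and T(x) = β − φ·x if x > 0. Then there exists a T-invariant Borel probability measure μ on ℝ, absolutely continuous with respect to Lebesgue measure, such that the Lyapunov exponent of T with respect to μ satisfies ∫ log |deriv T(x)| dμ(x) = (2(3−φ)/(βφ − 2(β + φ − 4)))·log φ. -/

import Mathlib

/-!
The points `T β < T 2 ≤ 0 ≤ T (T β) < T (T 2) ≤ 2 ≤ β` cut `[T β, β]` into intervals that `T`
maps onto unions of such intervals: the left branch is the translation by `2`, and on the right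
branch `T (T (T 2)) = T (T β)` because `φ ^ 2 = φ + 1`. The step density with values
`φ⁻², 1, φ, φ⁻¹` on the four intervals of `[T β, β]` cut out by `T 2`, `T (T 2)` and `2` is then
invariant, since the right branch contracts mass by `φ⁻¹` and `φ⁻² + φ⁻¹ = 1`.
As `log |T'|` is `log φ` on `(0, ∞)` and `0` on `(-∞, 0)`, the Lyapunov exponent is
`μ (0, ∞) · log φ`, and `μ (0, ∞)` is read off from the density.
-/

open MeasureTheory Set Real Topology
open scoped NNReal

noncomputable def twoBranchMap (β s x : ℝ) : ℝ := if x ≤ 0 then x + 2 else β - s * x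

lemma MeasureTheory.Measure.restrict_Ioc_eq_add {α : Type*} [TopologicalSpace α] [LinearOrder α]
    [OrderClosedTopology α] [MeasurableSpace α] [OpensMeasurableSpace α] (μ : Measure α)
    {a b c : α} (hab : a ≤ b) (hbc : b ≤ c) :
    μ.restrict (Ioc a c) = μ.restrict (Ioc a b) + μ.restrict (Ioc b c) := by
  rw [← Ioc_union_Ioc_eq_Ioc hab hbc,
    Measure.restrict_union (Ioc_disjoint_Ioc_of_le le_rfl) measurableSet_Ioc]

lemma Real.volume_real_Ioi_inter_Ioc (a b c : ℝ) :
    volume.real (Ioi a ∩ Ioc b c) = max (c - max b a) 0 := by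
  rw [inter_comm, Ioc_inter_Ioi, Real.volume_real_Ioc]

namespace twoBranchMap

variable {β s : ℝ}

lemma measurable : Measurable (twoBranchMap β s) :=
  Measurable.ite measurableSet_Iic (measurable_id.add_const 2)
    (measurable_const.sub (measurable_const.mul measurable_id))

lemma map_restrict_Ioc_of_nonpos {u v : ℝ} (hv : v ≤ 0) :
    (volume.restrict (Ioc u v)).map (twoBranchMap β s)
      = volume.restrict (Ioc (u + 2) (v + 2)) := by
  have hT : twoBranchMap β s =ᵐ[volume.restrict (Ioc u v)] (· + 2) :=
    (ae_restrict_iff' measurableSet_Ioc).2 <| .of_forall fun x hx => if_pos (hx.2.trans hv)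
  have hpre : (· + 2) ⁻¹' Ioc (u + 2) (v + 2) = Ioc u v := by simp
  rw [Measure.map_congr hT]
  ext A hA
  rw [Measure.map_apply (measurable_add_const 2) hA, Measure.restrict_apply hA,
    Measure.restrict_apply (measurable_add_const 2 hA), ← hpre, ← preimage_inter,
    measure_preimage_add_right]

lemma map_restrict_Ioc_of_nonneg (hs : 0 < s) {u v : ℝ} (hu : 0 ≤ u) :
    (volume.restrict (Ioc u v)).map (twoBranchMap β s)
      = s⁻¹.toNNReal • volume.restrict (Ioc (β - s * v) (β - s * u)) := by
  have hT : twoBranchMap β s =ᵐ[volume.restrict (Ioc u v)] fun x => β + -s * x :=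
    (ae_restrict_iff' measurableSet_Ioc).2 <| .of_forall fun x hx => by
      simp [twoBranchMap, not_le.2 (hu.trans_lt hx.1), sub_eq_add_neg]
  have hpre : (fun x => β + -s * x) ⁻¹' Ico (β - s * v) (β - s * u) = Ioc u v := by
    ext x
    simp only [mem_preimage, mem_Ico, mem_Ioc]
    constructor <;> rintro ⟨h₁, h₂⟩ <;> constructor <;> nlinarith
  have hg : Measurable fun x : ℝ => β + -s * x := by fun_prop
  rw [Measure.map_congr hT,
    ← Measure.restrict_congr_set (Ico_ae_eq_Ioc (a := β - s * v) (b := β - s * u))]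
  ext A hA
  rw [Measure.map_apply hg hA, Measure.restrict_apply (hg hA), ← hpre, ← preimage_inter,
    Measure.smul_apply, Measure.restrict_apply hA,
    show (fun x => β + -s * x) = (β + ·) ∘ (-s * ·) from rfl, preimage_comp,
    Real.volume_preimage_mul_left (neg_ne_zero.2 hs.ne'), measure_preimage_add, inv_neg, abs_neg,
    abs_of_pos (inv_pos.2 hs), ENNReal.smul_def]
  rfl

lemma log_abs_deriv {x : ℝ} (hx : x ≠ 0) :
    log |deriv (twoBranchMap β s) x| = (Ioi 0).indicator (fun _ => log |s|) x := by
  rcases hx.lt_or_gt with hx | hx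
  · have hT : twoBranchMap β s =ᶠ[𝓝 x] (· + 2) := by
      filter_upwards [Iio_mem_nhds hx] with y hy using if_pos hy.le
    simp [hT.deriv_eq, indicator_of_notMem (notMem_Ioi.2 hx.le)]
  · have hT : twoBranchMap β s =ᶠ[𝓝 x] (β - s * ·) := by
      filter_upwards [Ioi_mem_nhds hx] with y hy using if_neg (not_le.2 hy)
    simp [hT.deriv_eq, indicator_of_mem (mem_Ioi.2 hx)]

lemma integral_log_abs_deriv {μ : Measure ℝ} (hμ : μ ≪ volume) :
    ∫ x, log |deriv (twoBranchMap β s) x| ∂μ = μ.real (Ioi 0) * log |s| := by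
  have hae : (fun x => log |deriv (twoBranchMap β s) x|)
      =ᵐ[μ] (Ioi 0).indicator fun _ => log |s| := by
    filter_upwards [hμ.ae_le (Measure.ae_ne volume 0)] with x hx using log_abs_deriv hx
  rw [integral_congr_ae hae, integral_indicator_const _ measurableSet_Ioi, smul_eq_mul]

end twoBranchMap

section Golden

open scoped goldenRatio

lemma inv_goldenRatio_eq_sub_one : φ⁻¹ = φ - 1 := by
  rw [inv_goldenRatio, ← one_sub_goldenConj]; ring

lemma toNNReal_goldenRatio_inv_sq_add : φ⁻¹.toNNReal ^ 2 + φ⁻¹.toNNReal = 1 := by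
  rw [inv_goldenRatio_eq_sub_one]
  apply NNReal.eq
  push_cast [Real.coe_toNNReal _ (sub_nonneg.2 one_lt_goldenRatio.le)]
  linear_combination goldenRatio_sq

noncomputable def goldenInvariantMeasure (β : ℝ) : Measure ℝ :=
  φ⁻¹.toNNReal ^ 2 • volume.restrict (Ioc (β - φ * β) (β - φ * 2))
    + volume.restrict (Ioc (β - φ * 2) (β - φ * 2 + 2))
    + (1 + φ⁻¹.toNNReal) • volume.restrict (Ioc (β - φ * 2 + 2) 2)
    + φ⁻¹.toNNReal • volume.restrict (Ioc 2 β)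

variable {β : ℝ}

lemma goldenInvariantMeasure_absolutelyContinuous : goldenInvariantMeasure β ≪ volume := by
  have h (c : ℝ≥0) (a b : ℝ) : c • volume.restrict (Ioc a b) ≪ volume :=
    (Measure.absolutelyContinuous_of_le Measure.restrict_le_self).smul_left c
  unfold goldenInvariantMeasure
  simpa using (((h _ _ _).add_left (h 1 _ _)).add_left (h _ _ _)).add_left (h _ _ _)

instance : IsFiniteMeasure (goldenInvariantMeasure β) := by
  unfold goldenInvariantMeasure; infer_instance

theorem map_twoBranchMap_goldenInvariantMeasure (h2 : 2 ≤ β) (hβ : β ≤ 2 * φ) :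
    (goldenInvariantMeasure β).map (twoBranchMap β φ) = goldenInvariantMeasure β := by
  have hlm : β - φ * β ≤ β - φ * 2 := by nlinarith [goldenRatio_pos]
  have hm0 : β - φ * 2 ≤ 0 := by linarith
  have h0q : 0 ≤ β - φ * β + 2 := by nlinarith [goldenRatio_sq]
  have hqr : β - φ * β + 2 ≤ β - φ * 2 + 2 := by linarith
  have hr2 : β - φ * 2 + 2 ≤ 2 := by linarith
  -- `T (T (T 2)) = T (T β)`
  have hTr : β - φ * (β - φ * 2 + 2) = β - φ * β + 2 := by linear_combination 2 * goldenRatio_sq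
  have hmeas := twoBranchMap.measurable (β := β) (s := φ)
  conv_lhs =>
    rw [goldenInvariantMeasure, Measure.restrict_Ioc_eq_add volume hm0 (h0q.trans hqr)]
    simp only [Measure.map_add _ _ hmeas, Measure.map_smul]
    rw [twoBranchMap.map_restrict_Ioc_of_nonpos hm0, twoBranchMap.map_restrict_Ioc_of_nonpos le_rfl,
      twoBranchMap.map_restrict_Ioc_of_nonneg goldenRatio_pos le_rfl,
      twoBranchMap.map_restrict_Ioc_of_nonneg goldenRatio_pos (h0q.trans hqr),
      twoBranchMap.map_restrict_Ioc_of_nonneg goldenRatio_pos zero_le_two]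
    simp only [hTr, mul_zero, sub_zero, zero_add]
    rw [Measure.restrict_Ioc_eq_add volume hqr (hr2.trans h2),
      Measure.restrict_Ioc_eq_add volume hr2 h2]
  rw [goldenInvariantMeasure, Measure.restrict_Ioc_eq_add volume (hm0.trans h0q) hqr]
  have := toNNReal_goldenRatio_inv_sq_add
  generalize φ⁻¹.toNNReal = w at this ⊢
  match_scalars <;> grind

lemma goldenInvariantMeasure_real_apply {A : Set ℝ} (hA : MeasurableSet A) :
    (goldenInvariantMeasure β).real A
      = (φ - 1) ^ 2 * volume.real (A ∩ Ioc (β - φ * β) (β - φ * 2))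
        + volume.real (A ∩ Ioc (β - φ * 2) (β - φ * 2 + 2))
        + φ * volume.real (A ∩ Ioc (β - φ * 2 + 2) 2)
        + (φ - 1) * volume.real (A ∩ Ioc 2 β) := by
  rw [goldenInvariantMeasure, measureReal_add_apply, measureReal_add_apply, measureReal_add_apply]
  simp only [measureReal_nnreal_smul_apply, measureReal_restrict_apply hA, NNReal.coe_pow,
    NNReal.coe_add, NNReal.coe_one, Real.coe_toNNReal _ (inv_nonneg.2 goldenRatio_pos.le)]
  rw [inv_goldenRatio_eq_sub_one, add_sub_cancel]

lemma goldenInvariantMeasure_real_univ (h2 : 2 ≤ β) (hβ : β ≤ 2 * φ) :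
    (goldenInvariantMeasure β).real univ = β * φ - 2 * (β + φ - 4) := by
  have hlm : β - φ * β ≤ β - φ * 2 := by nlinarith [goldenRatio_pos]
  rw [goldenInvariantMeasure_real_apply MeasurableSet.univ]
  simp only [univ_inter]
  rw [Real.volume_real_Ioc_of_le hlm, Real.volume_real_Ioc_of_le (by linarith),
    Real.volume_real_Ioc_of_le (by linarith), Real.volume_real_Ioc_of_le h2]
  linear_combination (φ * β - 2 * φ - β + 4) * goldenRatio_sq

lemma goldenInvariantMeasure_real_Ioi_zero (h2 : 2 ≤ β) (hβ : β ≤ 2 * φ) :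
    (goldenInvariantMeasure β).real (Ioi 0) = 2 * (3 - φ) := by
  have hl : β - φ * β ≤ 0 := by nlinarith [one_lt_goldenRatio]
  have hm : β - φ * 2 ≤ 0 := by linarith
  have hr : 0 ≤ β - φ * 2 + 2 := by linarith [goldenRatio_lt_two]
  have hr2 : 0 ≤ 2 - (β - φ * 2 + 2) := by linarith
  have h2' : 0 ≤ β - 2 := by linarith
  rw [goldenInvariantMeasure_real_apply measurableSet_Ioi]
  simp only [Real.volume_real_Ioi_inter_Ioc, max_eq_left, max_eq_right, sub_zero, hl, hm, hr, hr2,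
    h2', zero_le_two]
  linear_combination 2 * goldenRatio_sq

end Golden

theorem lyapunov_before_plateau_s_phi (φ β : ℝ) (hφ : φ = (1 + Real.sqrt 5) / 2)
    (hβ₁ : 2 < β) (hβ₂ : β < 2 * φ)
    (T : ℝ → ℝ) (hT : T = fun x => if x ≤ 0 then x + 2 else β - φ * x) :
    ∃ μ : Measure ℝ, IsProbabilityMeasure μ ∧ μ.map T = μ ∧ μ ≪ volume ∧
      ∫ x, Real.log |deriv T x| ∂μ
        = (2 * (3 - φ) / (β * φ - 2 * (β + φ - 4))) * Real.log φ := by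
  obtain rfl : φ = goldenRatio := hφ
  obtain rfl : T = twoBranchMap β goldenRatio := hT
  set ν := goldenInvariantMeasure β
  have hmass : ν.real univ = β * goldenRatio - 2 * (β + goldenRatio - 4) :=
    goldenInvariantMeasure_real_univ hβ₁.le hβ₂.le
  have hpos : 0 < β * goldenRatio - 2 * (β + goldenRatio - 4) := by
    nlinarith [goldenRatio_lt_two]
  have : NeZero ν := ⟨fun h => by simp [h] at hmass; linarith⟩
  refine ⟨(ν univ)⁻¹ • ν, inferInstance, ?_, ?_, ?_⟩
  · rw [Measure.map_smul, map_twoBranchMap_goldenInvariantMeasure hβ₁.le hβ₂.le]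
  · exact goldenInvariantMeasure_absolutelyContinuous.smul_left _
  · rw [twoBranchMap.integral_log_abs_deriv
        (goldenInvariantMeasure_absolutelyContinuous.smul_left _), measureReal_ennreal_smul_apply,
      ENNReal.toReal_inv, ← measureReal_def, hmass,
      goldenInvariantMeasure_real_Ioi_zero hβ₁.le hβ₂.le, abs_of_pos goldenRatio_pos]
    ring
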